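/- Let π: (Q,n,k) → (R,m,k) be a surjection of Noetherian local rings with ker π ⊆ n². Let M be a finitely generated Q-module having a linear resolution over Q, let N be a finitely generated R-module, and let φ: M → N be a homomorphism of Q-modules such that the induced map M/nM → N/mN is injective. Then for every i ≥ 0 the induced map Tor_i^Q(M,k) → Tor_i^R(N,k) is injective. -/

import Mathlib

open IsLocalRing

universe u v

/-- `d`, `ε` form a minimal free resolution of the `R`-module `M`,
with `i`-th Betti number `b i`. -/
def IsMinFreeRes (R : Type u) [CommRing R] [IsLocalRing R]
    (M : Type v) [AddCommGroup M] [Module R M] (b : ℕ → ℕ)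
    (d : ∀ i : ℕ, ((Fin (b (i+1)) → R) →ₗ[R] (Fin (b i) → R)))
    (ε : (Fin (b 0) → R) →ₗ[R] M) : Prop :=
  Function.Surjective ε ∧ Function.Exact (d 0) ε ∧
  (∀ i, Function.Exact (d (i+1)) (d i)) ∧
  (∀ i, LinearMap.range (d i) ≤ (maximalIdeal R) • (⊤ : Submodule R (Fin (b i) → R)))

/-- `b` is the sequence of Betti numbers of the `R`-module `M`. -/
def HasBettiSeq (R : Type u) [CommRing R] [IsLocalRing R]
    (M : Type v) [AddCommGroup M] [Module R M] (b : ℕ → ℕ) : Prop :=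
  ∃ d ε, IsMinFreeRes R M b d ε

/-- The depth of a module: the supremum of lengths of `M`-regular sequences
contained in the maximal ideal. -/
noncomputable def mdepth (R : Type u) [CommRing R] [IsLocalRing R]
    (M : Type v) [AddCommGroup M] [Module R M] : ℕ∞ :=
  sSup {n : ℕ∞ | ∃ rs : List R, (rs.length : ℕ∞) = n ∧ (∀ r ∈ rs, r ∈ maximalIdeal R) ∧
    RingTheory.Sequence.IsRegular M rs}

/-- The (Krull) dimension of a module. -/
noncomputable def mdim (R : Type u) [CommRing R]
    (M : Type v) [AddCommGroup M] [Module R M] : WithBot ℕ∞ :=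
  ringKrullDim (R ⧸ Module.annihilator R M)

/-- The length of a module. -/
noncomputable def mlength (R : Type u) [CommRing R]
    (M : Type v) [AddCommGroup M] [Module R M] : ℕ∞ :=
  sSup {n : ℕ∞ | ∃ c : RelSeries {p : Submodule R M × Submodule R M | p.1 < p.2}, (c.length : ℕ∞) = n}

/-- The minimal number of generators of a module. -/
noncomputable def mu (R : Type u) [CommRing R]
    (M : Type v) [AddCommGroup M] [Module R M] : ℕ :=
  sInf {n | ∃ s : Fin n → M, Submodule.span R (Set.range s) = ⊤}

/-- A Cohen--Macaulay local ring: Noetherian local with `depth = dim`. -/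
def IsCMLocalRing (R : Type u) [CommRing R] [IsLocalRing R] : Prop :=
  IsNoetherianRing R ∧ (mdepth R R : WithBot ℕ∞) = ringKrullDim R

/-- A Cohen--Macaulay module of dimension `d`. -/
def IsCMModOfDim (R : Type u) [CommRing R] [IsLocalRing R]
    (M : Type v) [AddCommGroup M] [Module R M] (d : ℕ) : Prop :=
  Module.Finite R M ∧ mdepth R M = (d : ℕ∞) ∧ mdim R M = (d : WithBot ℕ∞)

/-- A maximal Cohen--Macaulay module. -/
def IsMCMMod (R : Type u) [CommRing R] [IsLocalRing R]
    (M : Type v) [AddCommGroup M] [Module R M] : Prop :=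
  Module.Finite R M ∧ (mdepth R M : WithBot ℕ∞) = ringKrullDim R

/-- `M` has finite injective dimension over `R`. -/
def HasFiniteInjDim (R : Type u) [CommRing R]
    (M : Type v) [AddCommGroup M] [Module R M] : Prop :=
  ∃ (n : ℕ) (I : ℕ → ModuleCat.{v} R) (d : ∀ i, I i →ₗ[R] I (i+1)) (ε : M →ₗ[R] I 0),
    Function.Injective ε ∧ (∀ i, Module.Injective R (I i)) ∧
    Function.Exact ε (d 0) ∧ (∀ i, Function.Exact (d i) (d (i+1))) ∧
    (∀ i, n < i → Subsingleton (I i))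

/-- `ω` is a canonical module of the local ring `R`: a maximal Cohen--Macaulay module
of finite injective dimension such that the natural map `R → Hom_R(ω, ω)` is an
isomorphism. -/
def IsCanonicalModule (R : Type u) [CommRing R] [IsLocalRing R]
    (ω : Type v) [AddCommGroup ω] [Module R ω] : Prop :=
  IsMCMMod R ω ∧ HasFiniteInjDim R ω ∧
    Function.Bijective (algebraMap R (Module.End R ω))

/-- A Gorenstein local ring: Noetherian, of finite injective dimension over itself. -/
def IsGorensteinLocalRing (R : Type u) [CommRing R] [IsLocalRing R] : Prop :=
  IsNoetherianRing R ∧ HasFiniteInjDim R R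

/-- A sequence of natural numbers grows exponentially. -/
def ExpGrowth (b : ℕ → ℕ) : Prop :=
  ∃ α β : ℝ, 1 < α ∧ α < β ∧ ∀ᶠ n in Filter.atTop, α ^ n < (b n : ℝ) ∧ (b n : ℝ) < β ^ n

/-- A sequence of natural numbers is eventually strictly increasing. -/
def EvStrictIncr (b : ℕ → ℕ) : Prop := ∃ N, ∀ n, N ≤ n → b n < b (n+1)

/-- `M` has a linear (minimal free) resolution: the induced maps
`F_i/mF_i → mF_{i-1}/m²F_{i-1}` are injective. -/
def HasLinearRes (R : Type u) [CommRing R] [IsLocalRing R]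
    (M : Type v) [AddCommGroup M] [Module R M] : Prop :=
  ∃ b d ε, IsMinFreeRes R M b d ε ∧
    ∀ (i : ℕ) (v : Fin (b (i+1)) → R),
      d i v ∈ ((maximalIdeal R)^2 • (⊤ : Submodule R (Fin (b i) → R))) →
        v ∈ (maximalIdeal R • (⊤ : Submodule R (Fin (b (i+1)) → R)))

/-!
Induct on `i`. If `Φᵢ₊₁ v ∈ 𝔪Gᵢ₊₁`, minimality of `G` gives `Φᵢ (d v) = d (Φᵢ₊₁ v) ∈ 𝔪²Gᵢ`.
By induction `Φᵢ` is injective modulo the maximal ideals, so its `R`-linearization is a split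
injection and therefore reflects `𝔪²`; as `ker π ⊆ 𝔫²` this gives `d v ∈ 𝔫²Fᵢ`, and linearity
of `F` gives `v ∈ 𝔫Fᵢ₊₁`. Linearity passes from one minimal resolution of `M` to any other,
because a chain map between minimal resolutions lifting zero is null-homotopic and hence
vanishes modulo `𝔫`.
-/

section FreeModules

variable {R : Type*} [CommRing R]

theorem mem_ideal_smul_top_pi_iff {ι : Type*} [Fintype ι] (I : Ideal R) (x : ι → R) :
    x ∈ I • (⊤ : Submodule R (ι → R)) ↔ ∀ j, x j ∈ I := by
  classical
  refine ⟨fun hx j => ?_, fun hx => ?_⟩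
  · exact Submodule.smul_induction_on hx (fun r hr y _ => I.mul_mem_right (y j) hr)
      (fun _ _ => I.add_mem)
  · rw [pi_eq_sum_univ x]
    exact Submodule.sum_mem _ fun j _ => Submodule.smul_mem_smul (hx j) trivial

theorem LinearMap.apply_mem_pow_two_smul_top {M N : Type*} [AddCommGroup M] [Module R M]
    [AddCommGroup N] [Module R N] {I : Ideal R} (f : M →ₗ[R] N)
    (hf : LinearMap.range f ≤ I • ⊤) {v : M} (hv : v ∈ I • (⊤ : Submodule R M)) :
    f v ∈ (I ^ 2) • (⊤ : Submodule R N) := by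
  have hv' : f v ∈ I • LinearMap.range f := by
    rw [LinearMap.range_eq_map, ← Submodule.map_smul'']
    exact Submodule.mem_map_of_mem hv
  rw [pow_two, ← Ideal.smul_eq_mul, Submodule.smul_assoc]
  exact Submodule.smul_mono le_rfl hf hv'

theorem LinearMap.exists_comp_eq_of_range_le {P M N : Type*} [AddCommGroup P] [Module R P]
    [Module.Projective R P] [AddCommGroup M] [Module R M] [AddCommGroup N] [Module R N]
    (f : P →ₗ[R] N) (g : M →ₗ[R] N) (h : LinearMap.range f ≤ LinearMap.range g) :
    ∃ f' : P →ₗ[R] M, g ∘ₗ f' = f := by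
  obtain ⟨f', hf'⟩ := Module.projective_lifting_property g.rangeRestrict
    (f.codRestrict (LinearMap.range g) fun v => h ⟨v, rfl⟩) g.surjective_rangeRestrict
  exact ⟨f', LinearMap.ext fun v => congrArg Subtype.val (LinearMap.congr_fun hf' v)⟩

noncomputable def LinearMap.liftOfRangeLe {P M N : Type*} [AddCommGroup P] [Module R P]
    [Module.Projective R P] [AddCommGroup M] [Module R M] [AddCommGroup N] [Module R N]
    (f : P →ₗ[R] N) (g : M →ₗ[R] N) (h : LinearMap.range f ≤ LinearMap.range g) : P →ₗ[R] M :=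
  (f.exists_comp_eq_of_range_le g h).choose

theorem LinearMap.comp_liftOfRangeLe {P M N : Type*} [AddCommGroup P] [Module R P]
    [Module.Projective R P] [AddCommGroup M] [Module R M] [AddCommGroup N] [Module R N]
    (f : P →ₗ[R] N) (g : M →ₗ[R] N) (h : LinearMap.range f ≤ LinearMap.range g) :
    g ∘ₗ f.liftOfRangeLe g h = f :=
  (f.exists_comp_eq_of_range_le g h).choose_spec

theorem Function.Exact.range_le_range_of_comp_eq_zero {M N P L : Type*} [AddCommGroup M]
    [Module R M] [AddCommGroup N] [Module R N] [AddCommGroup P] [Module R P] [AddCommGroup L]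
    [Module R L] {f : M →ₗ[R] N} {g : N →ₗ[R] P} (h : Function.Exact f g) {k : L →ₗ[R] N}
    (hk : g ∘ₗ k = 0) : LinearMap.range k ≤ LinearMap.range f :=
  h.linearMap_ker_eq ▸ LinearMap.range_le_ker_iff.mpr hk

theorem IsLocalRing.exists_leftInverse_of_injective_mod_maximalIdeal [IsLocalRing R]
    {M N : Type*} [AddCommGroup M] [Module R M] [Module.Finite R M]
    [AddCommGroup N] [Module R N] [Module.Finite R N] [Module.Free R N] (f : M →ₗ[R] N)
    (hf : ∀ v, f v ∈ maximalIdeal R • (⊤ : Submodule R N) →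
      v ∈ maximalIdeal R • (⊤ : Submodule R M)) :
    ∃ g : N →ₗ[R] M, g ∘ₗ f = LinearMap.id := by
  open TensorProduct in
  refine (split_injective_iff_lTensor_residueField_injective f).mpr ?_
  rw [injective_iff_map_eq_zero]
  intro x hx
  obtain ⟨v, rfl⟩ := mk_surjective R M (ResidueField R) residue_surjective x
  rw [mk_apply, LinearMap.lTensor_tmul] at hx
  have hfv : f v ∈ maximalIdeal R • (⊤ : Submodule R N) := by
    rw [← Submodule.Quotient.mk_eq_zero, ← quotTensorEquivQuotSMul_mk_one_tmul]
    exact (congrArg _ hx).trans (map_zero _)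
  have hv : Submodule.Quotient.mk (p := maximalIdeal R • (⊤ : Submodule R M)) v = 0 :=
    (Submodule.Quotient.mk_eq_zero _).mpr (hf v hfv)
  exact (quotTensorEquivQuotSMul_symm_mk (maximalIdeal R) v).symm.trans
    ((congrArg _ hv).trans (map_zero _))

end FreeModules

section SurjectiveRingHom

variable {Q R : Type*} [CommRing Q] [CommRing R] {π : Q →+* R}

theorem Ideal.apply_mem_map_iff_of_ker_le (hπ : Function.Surjective π) {I : Ideal Q}
    (hI : RingHom.ker π ≤ I) (x : Q) : π x ∈ I.map π ↔ x ∈ I := by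
  rw [← Ideal.mem_comap, Ideal.comap_map_of_surjective' π hπ, sup_eq_left.mpr hI]

theorem comp_mem_map_smul_top_pi_iff {ι : Type*} [Fintype ι] (hπ : Function.Surjective π)
    {I : Ideal Q} (hI : RingHom.ker π ≤ I) (w : ι → Q) :
    π ∘ w ∈ I.map π • (⊤ : Submodule R (ι → R)) ↔ w ∈ I • (⊤ : Submodule Q (ι → Q)) := by
  simp only [mem_ideal_smul_top_pi_iff, Function.comp_apply,
    Ideal.apply_mem_map_iff_of_ker_le hπ hI]

theorem LinearMap.exists_linearMap_apply_comp_eq {ι N : Type*} [Fintype ι] [AddCommGroup N]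
    [Module R N] (Φ : (ι → Q) →ₛₗ[π] N) : ∃ f : (ι → R) →ₗ[R] N, ∀ w, f (π ∘ w) = Φ w := by
  classical
  refine ⟨Fintype.linearCombination R fun j => Φ (Pi.single j 1), fun w => ?_⟩
  conv_rhs => rw [← Finset.univ_sum_single w]
  rw [Fintype.linearCombination_apply, map_sum]
  refine Finset.sum_congr rfl fun j _ => ?_
  rw [Function.comp_apply, ← Φ.map_smulₛₗ, ← Pi.single_smul, smul_eq_mul, mul_one]

variable [IsLocalRing Q] [IsLocalRing R]

theorem mem_maximalIdeal_sq_smul_top_of_semilinear {ι κ : Type*} [Fintype ι] [Fintype κ]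
    (hπ : Function.Surjective π) (hker : RingHom.ker π ≤ maximalIdeal Q ^ 2)
    (Φ : (ι → Q) →ₛₗ[π] (κ → R))
    (hΦ : ∀ w, Φ w ∈ maximalIdeal R • (⊤ : Submodule R (κ → R)) →
      w ∈ maximalIdeal Q • (⊤ : Submodule Q (ι → Q)))
    {w : ι → Q} (hw : Φ w ∈ maximalIdeal R ^ 2 • (⊤ : Submodule R (κ → R))) :
    w ∈ maximalIdeal Q ^ 2 • (⊤ : Submodule Q (ι → Q)) := by
  have hm : (maximalIdeal Q).map π = maximalIdeal R := map_maximalIdeal_of_surjective π hπ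
  obtain ⟨f, hf⟩ := Φ.exists_linearMap_apply_comp_eq
  have hf_inj : ∀ x, f x ∈ maximalIdeal R • (⊤ : Submodule R (κ → R)) →
      x ∈ maximalIdeal R • (⊤ : Submodule R (ι → R)) := by
    intro x hx
    obtain ⟨w, rfl⟩ := hπ.comp_left x
    rw [← hm, comp_mem_map_smul_top_pi_iff hπ (hker.trans (Ideal.pow_le_self two_ne_zero))]
    exact hΦ w (hf w ▸ hx)
  obtain ⟨g, hg⟩ := exists_leftInverse_of_injective_mod_maximalIdeal f hf_inj
  have hgf : g (f (π ∘ w)) = π ∘ w := LinearMap.congr_fun hg _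
  rw [← comp_mem_map_smul_top_pi_iff hπ hker, Ideal.map_pow, hm, ← hgf, hf]
  exact Submodule.smul_top_le_comap_smul_top _ g hw

end SurjectiveRingHom

def HasLinearDifferentials (R : Type*) [CommRing R] [IsLocalRing R] {b : ℕ → ℕ}
    (d : ∀ i : ℕ, (Fin (b (i+1)) → R) →ₗ[R] (Fin (b i) → R)) : Prop :=
  ∀ (i : ℕ) (v : Fin (b (i+1)) → R),
    d i v ∈ (maximalIdeal R ^ 2) • (⊤ : Submodule R (Fin (b i) → R)) →
      v ∈ maximalIdeal R • (⊤ : Submodule R (Fin (b (i+1)) → R))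

namespace IsMinFreeRes

variable {Q : Type*} [CommRing Q] [IsLocalRing Q]
  {M : Type*} [AddCommGroup M] [Module Q M] {b : ℕ → ℕ}
  {d : ∀ i : ℕ, (Fin (b (i+1)) → Q) →ₗ[Q] (Fin (b i) → Q)} {ε : (Fin (b 0) → Q) →ₗ[Q] M}
  {M' : Type*} [AddCommGroup M'] [Module Q M'] {b' : ℕ → ℕ}
  {d' : ∀ i : ℕ, (Fin (b' (i+1)) → Q) →ₗ[Q] (Fin (b' i) → Q)} {ε' : (Fin (b' 0) → Q) →ₗ[Q] M'}

theorem mem_smul_top_of_augmentation_mem (hF : IsMinFreeRes Q M b d ε) {v : Fin (b 0) → Q}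
    (hv : ε v ∈ maximalIdeal Q • (⊤ : Submodule Q M)) :
    v ∈ maximalIdeal Q • (⊤ : Submodule Q (Fin (b 0) → Q)) := by
  have hv' : v ∈ (maximalIdeal Q • (⊤ : Submodule Q M)).comap ε := hv
  rw [Submodule.comap_smul_top_of_surjective _ _ hF.1, LinearMap.exact_iff.mp hF.2.1] at hv'
  exact sup_le le_rfl (hF.2.2.2 0) hv'

/-- A comparison map from `F` to `F'` lifting `φ`. Each component is bundled with the fact that
its composite with the differential lands in the boundaries of `F'`, which is what lets the next
component be lifted. -/
noncomputable def comparison (hF : IsMinFreeRes Q M b d ε) (hF' : IsMinFreeRes Q M' b' d' ε')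
    (φ : M →ₗ[Q] M') :
    ∀ i, {α : (Fin (b i) → Q) →ₗ[Q] (Fin (b' i) → Q) //
      LinearMap.range (α ∘ₗ d i) ≤ LinearMap.range (d' i)}
  | 0 =>
    have h := le_top.trans_eq (LinearMap.range_eq_top.mpr hF'.1).symm
    ⟨(φ ∘ₗ ε).liftOfRangeLe ε' h, hF'.2.1.range_le_range_of_comp_eq_zero <| by
      rw [← LinearMap.comp_assoc, LinearMap.comp_liftOfRangeLe, LinearMap.comp_assoc,
        hF.2.1.linearMap_comp_eq_zero, LinearMap.comp_zero]⟩
  | i+1 =>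
    have α := comparison hF hF' φ i
    ⟨(α.1 ∘ₗ d i).liftOfRangeLe (d' i) α.2, (hF'.2.2.1 i).range_le_range_of_comp_eq_zero <| by
      rw [← LinearMap.comp_assoc, LinearMap.comp_liftOfRangeLe, LinearMap.comp_assoc,
        (hF.2.2.1 i).linearMap_comp_eq_zero, LinearMap.comp_zero]⟩

theorem exists_chainMap (hF : IsMinFreeRes Q M b d ε) (hF' : IsMinFreeRes Q M' b' d' ε')
    (φ : M →ₗ[Q] M') :
    ∃ α : ∀ i, (Fin (b i) → Q) →ₗ[Q] (Fin (b' i) → Q),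
      ε' ∘ₗ α 0 = φ ∘ₗ ε ∧ ∀ i, d' i ∘ₗ α (i+1) = α i ∘ₗ d i :=
  ⟨fun i => (comparison hF hF' φ i).1,
    LinearMap.comp_liftOfRangeLe _ _ (le_top.trans_eq (LinearMap.range_eq_top.mpr hF'.1).symm),
    fun i => LinearMap.comp_liftOfRangeLe _ _ (comparison hF hF' φ i).2⟩

theorem apply_mem_smul_top_of_comp_eq_zero (hF : IsMinFreeRes Q M b d ε)
    (hF' : IsMinFreeRes Q M' b' d' ε') (δ : ∀ i, (Fin (b i) → Q) →ₗ[Q] (Fin (b' i) → Q))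
    (hδ0 : ε' ∘ₗ δ 0 = 0) (hδ : ∀ i, d' i ∘ₗ δ (i+1) = δ i ∘ₗ d i) (i : ℕ)
    (v : Fin (b i) → Q) : δ i v ∈ maximalIdeal Q • (⊤ : Submodule Q (Fin (b' i) → Q)) := by
  -- the invariant is a null-homotopy `δᵢ = d' sᵢ + sᵢ₋₁ d`; by minimality both terms lie in `𝔫F'ᵢ`
  suffices H : ∀ i, ∃ s : (Fin (b i) → Q) →ₗ[Q] (Fin (b' (i+1)) → Q),
      d' i ∘ₗ s ∘ₗ d i = δ i ∘ₗ d i ∧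
      ∀ v, δ i v - d' i (s v) ∈ maximalIdeal Q • (⊤ : Submodule Q (Fin (b' i) → Q)) by
    obtain ⟨s, -, hs⟩ := H i
    simpa using Submodule.add_mem _ (hs v) (hF'.2.2.2 i ⟨s v, rfl⟩)
  intro i
  induction i with
  | zero =>
    obtain ⟨s, hs⟩ := (δ 0).exists_comp_eq_of_range_le (d' 0)
      (hF'.2.1.range_le_range_of_comp_eq_zero hδ0)
    refine ⟨s, by rw [← LinearMap.comp_assoc, hs], fun v => ?_⟩
    rw [← LinearMap.comp_apply, hs, sub_self]
    exact zero_mem _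
  | succ i ih =>
    obtain ⟨s, hs, -⟩ := ih
    obtain ⟨s', hs'⟩ := (δ (i+1) - s ∘ₗ d i).exists_comp_eq_of_range_le (d' (i+1))
      ((hF'.2.2.1 i).range_le_range_of_comp_eq_zero <| by
        rw [LinearMap.comp_sub, hδ, hs, sub_self])
    refine ⟨s', ?_, fun v => ?_⟩
    · rw [← LinearMap.comp_assoc, hs', LinearMap.sub_comp, LinearMap.comp_assoc,
        (hF.2.2.1 i).linearMap_comp_eq_zero, LinearMap.comp_zero, sub_zero]
    · rw [← LinearMap.comp_apply, hs', LinearMap.sub_apply, sub_sub_cancel]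
      exact Submodule.smul_top_le_comap_smul_top _ s (hF.2.2.2 i ⟨v, rfl⟩)

theorem hasLinearDifferentials (hF : IsMinFreeRes Q M b d ε) (hM : HasLinearRes Q M) :
    HasLinearDifferentials Q d := by
  obtain ⟨b', d', ε', hF', hlin'⟩ := hM
  obtain ⟨α, hα0, hα⟩ := exists_chainMap hF hF' LinearMap.id
  obtain ⟨β, hβ0, hβ⟩ := exists_chainMap hF' hF LinearMap.id
  have hβα : ∀ i v, β i (α i v) - v ∈ maximalIdeal Q • (⊤ : Submodule Q (Fin (b i) → Q)) :=
    apply_mem_smul_top_of_comp_eq_zero hF hF (fun i => β i ∘ₗ α i - LinearMap.id)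
      (by rw [LinearMap.comp_sub, ← LinearMap.comp_assoc, hβ0, LinearMap.comp_assoc, hα0,
        LinearMap.id_comp, LinearMap.id_comp, LinearMap.comp_id, sub_self])
      (fun i => by
        rw [LinearMap.comp_sub, LinearMap.sub_comp, ← LinearMap.comp_assoc, hβ,
          LinearMap.comp_assoc, hα, LinearMap.comp_assoc, LinearMap.comp_id, LinearMap.id_comp])
  intro i v hv
  have hαv : α (i+1) v ∈ maximalIdeal Q • ⊤ := hlin' i _ <| by
    rw [← LinearMap.comp_apply, hα]
    exact Submodule.smul_top_le_comap_smul_top _ (α i) hv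
  have hβαv : β (i+1) (α (i+1) v) ∈ maximalIdeal Q • ⊤ :=
    Submodule.mem_comap.mp (Submodule.smul_top_le_comap_smul_top _ (β (i+1)) hαv)
  simpa using sub_mem hβαv (hβα (i+1) v)

end IsMinFreeRes

theorem IsMinFreeRes.mem_smul_top_of_chainMap_apply_mem {Q R : Type*} [CommRing Q]
    [IsLocalRing Q] [CommRing R] [IsLocalRing R] {π : Q →+* R} (hπ : Function.Surjective π)
    (hker : RingHom.ker π ≤ maximalIdeal Q ^ 2)
    {M N : Type*} [AddCommGroup M] [Module Q M] [AddCommGroup N] [Module R N]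
    {φ : M →ₛₗ[π] N}
    (hφ : ∀ x, φ x ∈ maximalIdeal R • (⊤ : Submodule R N) →
      x ∈ maximalIdeal Q • (⊤ : Submodule Q M))
    {bF : ℕ → ℕ} {dF : ∀ i : ℕ, (Fin (bF (i+1)) → Q) →ₗ[Q] (Fin (bF i) → Q)}
    {εF : (Fin (bF 0) → Q) →ₗ[Q] M} (hF : IsMinFreeRes Q M bF dF εF)
    (hlin : HasLinearDifferentials Q dF)
    {bG : ℕ → ℕ} {dG : ∀ i : ℕ, (Fin (bG (i+1)) → R) →ₗ[R] (Fin (bG i) → R)}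
    {εG : (Fin (bG 0) → R) →ₗ[R] N}
    (hdG : ∀ i, LinearMap.range (dG i) ≤ maximalIdeal R • ⊤)
    {Φ : ∀ i : ℕ, (Fin (bF i) → Q) →ₛₗ[π] (Fin (bG i) → R)}
    (hΦ0 : ∀ v, εG (Φ 0 v) = φ (εF v))
    (hΦ : ∀ (i : ℕ) (v : Fin (bF (i+1)) → Q), Φ i (dF i v) = dG i (Φ (i+1) v)) :
    ∀ (i : ℕ) (v : Fin (bF i) → Q), Φ i v ∈ maximalIdeal R • (⊤ : Submodule R (Fin (bG i) → R)) →
      v ∈ maximalIdeal Q • (⊤ : Submodule Q (Fin (bF i) → Q))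
  | 0, v, hv => hF.mem_smul_top_of_augmentation_mem <| hφ _ <|
      hΦ0 v ▸ Submodule.smul_top_le_comap_smul_top _ εG hv
  | i+1, v, hv => by
    have hdv : Φ i (dF i v) ∈ maximalIdeal R ^ 2 • ⊤ :=
      hΦ i v ▸ (dG i).apply_mem_pow_two_smul_top (hdG i) hv
    exact hlin i v <| mem_maximalIdeal_sq_smul_top_of_semilinear hπ hker (Φ i)
      (mem_smul_top_of_chainMap_apply_mem hπ hker hφ hF hlin hdG hΦ0 hΦ i) hdv

/-- `Tor_i^Q(M,k) = F_i/𝔫F_i` and `Tor_i^R(N,k) = G_i/𝔪G_i` for minimal resolutions `F`, `G`,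
and the map between them is induced by `Φ_i`. -/
theorem tor_maps_injective_of_linear_resolution_general
    (Q : Type u) [CommRing Q] [IsLocalRing Q]
    (R : Type u) [CommRing R] [IsLocalRing R]
    (π : Q →+* R) (hsurj : Function.Surjective π)
    (hker : RingHom.ker π ≤ (maximalIdeal Q) ^ 2)
    (M : Type u) [AddCommGroup M] [Module Q M]
    (N : Type u) [AddCommGroup N] [Module R N]
    (hM : HasLinearRes Q M)
    (φ : M →ₛₗ[π] N)
    (hφ : ∀ x : M, φ x ∈ (maximalIdeal R • (⊤ : Submodule R N)) →
      x ∈ (maximalIdeal Q • (⊤ : Submodule Q M)))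
    -- minimal free resolutions of `M` over `Q` and of `N` over `R`
    (bF : ℕ → ℕ) (dF : ∀ i : ℕ, ((Fin (bF (i+1)) → Q) →ₗ[Q] (Fin (bF i) → Q)))
    (εF : (Fin (bF 0) → Q) →ₗ[Q] M) (hF : IsMinFreeRes Q M bF dF εF)
    (bG : ℕ → ℕ) (dG : ∀ i : ℕ, ((Fin (bG (i+1)) → R) →ₗ[R] (Fin (bG i) → R)))
    (εG : (Fin (bG 0) → R) →ₗ[R] N) (hG : IsMinFreeRes R N bG dG εG)
    -- a chain map `Φ` lifting `φ`
    (Φ : ∀ i : ℕ, (Fin (bF i) → Q) →ₛₗ[π] (Fin (bG i) → R))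
    (hΦ0 : ∀ v, εG (Φ 0 v) = φ (εF v))
    (hΦ : ∀ (i : ℕ) (v : Fin (bF (i+1)) → Q), Φ i (dF i v) = dG i (Φ (i+1) v)) :
    ∀ (i : ℕ) (v : Fin (bF i) → Q),
      Φ i v ∈ (maximalIdeal R • (⊤ : Submodule R (Fin (bG i) → R))) →
        v ∈ (maximalIdeal Q • (⊤ : Submodule Q (Fin (bF i) → Q))) :=
  hF.mem_smul_top_of_chainMap_apply_mem hsurj hker hφ (hF.hasLinearDifferentials hM) hG.2.2.2
    hΦ0 hΦ

/-- Let `π : Q → R` be a surjection of local rings with `ker π ⊆ n²`, let `M` be a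
`Q`-module with a linear resolution, `N` an `R`-module, and `φ : M → N` a `Q`-linear
(i.e. `π`-semilinear) map inducing an injection `M/nM → N/mN`.  Then the induced maps
`Tor_i^Q(M,k) → Tor_i^R(N,k)` are injective for all `i`.  Here `Tor` is computed by
minimal free resolutions `F` of `M` and `G` of `N`, so that `Tor_i^Q(M,k) = F_i/nF_i`
and `Tor_i^R(N,k) = G_i/mG_i`, and the map is the one induced by any chain map `Φ`
lifting `φ`. -/
theorem tor_maps_injective_of_linear_resolution
    (Q : Type u) [CommRing Q] [IsLocalRing Q] [IsNoetherianRing Q]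
    (R : Type u) [CommRing R] [IsLocalRing R] [IsNoetherianRing R]
    (π : Q →+* R) (hsurj : Function.Surjective π)
    (hker : RingHom.ker π ≤ (maximalIdeal Q) ^ 2)
    (M : Type u) [AddCommGroup M] [Module Q M] [Module.Finite Q M]
    (N : Type u) [AddCommGroup N] [Module R N] [Module.Finite R N]
    (hM : HasLinearRes Q M)
    (φ : M →ₛₗ[π] N)
    (hφ : ∀ x : M, φ x ∈ (maximalIdeal R • (⊤ : Submodule R N)) →
      x ∈ (maximalIdeal Q • (⊤ : Submodule Q M)))
    -- minimal free resolutions of `M` over `Q` and of `N` over `R`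
    (bF : ℕ → ℕ) (dF : ∀ i : ℕ, ((Fin (bF (i+1)) → Q) →ₗ[Q] (Fin (bF i) → Q)))
    (εF : (Fin (bF 0) → Q) →ₗ[Q] M) (hF : IsMinFreeRes Q M bF dF εF)
    (bG : ℕ → ℕ) (dG : ∀ i : ℕ, ((Fin (bG (i+1)) → R) →ₗ[R] (Fin (bG i) → R)))
    (εG : (Fin (bG 0) → R) →ₗ[R] N) (hG : IsMinFreeRes R N bG dG εG)
    -- a chain map `Φ` lifting `φ`
    (Φ : ∀ i : ℕ, (Fin (bF i) → Q) →ₛₗ[π] (Fin (bG i) → R))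
    (hΦ0 : ∀ v, εG (Φ 0 v) = φ (εF v))
    (hΦ : ∀ (i : ℕ) (v : Fin (bF (i+1)) → Q), Φ i (dF i v) = dG i (Φ (i+1) v)) :
    ∀ (i : ℕ) (v : Fin (bF i) → Q),
      Φ i v ∈ (maximalIdeal R • (⊤ : Submodule R (Fin (bG i) → R))) →
        v ∈ (maximalIdeal Q • (⊤ : Submodule Q (Fin (bF i) → Q))) :=
  tor_maps_injective_of_linear_resolution_general Q R π hsurj hker M N hM φ hφ bF dF εF hF bG dG εG
    hG Φ hΦ0 hΦ
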